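/- If s ∈ D_n has maximum nesting depth k, then the image Γ(s) under the D_n-to-D₂ encoding has maximum nesting depth k·m, where m = ⌈log₂ n⌉. -/
import Mathlib




/-- The four-symbol alphabet `{(, ), [, ]}` of Dyck-2. -/
inductive Par : Type
  | lp  -- (
  | rp  -- )
  | lb  -- [
  | rb  -- ]
deriving DecidableEq

/-- The Dyck language `Dₙ` over `n` parenthesis pairs; a symbol `(i, true)` is the
opening parenthesis `pᵢ` and `(i, false)` its closing `p̄ᵢ`. -/
inductive DyckN (n : ℕ) : List (Fin n × Bool) → Prop
  | nil : DyckN n []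
  | wrap {u : List (Fin n × Bool)} (i : Fin n) :
      DyckN n u → DyckN n ((i, true) :: u ++ [(i, false)])
  | append {u v : List (Fin n × Bool)} : DyckN n u → DyckN n v → DyckN n (u ++ v)

/-- The `m`-digit binary representation of `i` (most significant bit first). -/
def binDigits (m i : ℕ) : List Bool := (List.range m).map fun j => i.testBit (m - 1 - j)

/-- `Γ(pᵢ)`: the `m`-digit binary representation of `i`, with `(` for 0 and `[` for 1. -/
def encOpen (m i : ℕ) : List Par := (binDigits m i).map fun b => if b then Par.lb else Par.lp

/-- `Γ(p̄ᵢ)`: the reverse of the `m`-digit binary representation of `i`, with `)` for 0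
and `]` for 1. -/
def encClose (m i : ℕ) : List Par :=
  ((binDigits m i).reverse).map fun b => if b then Par.rb else Par.rp

/-- `Γ` extended to strings by concatenation. -/
def Γ (n m : ℕ) (s : List (Fin n × Bool)) : List Par :=
  (s.map fun a => if a.2 then encOpen m a.1.val else encClose m a.1.val).flatten

/-- The maximum nesting depth of a word over `Dₙ`'s alphabet: the maximum over prefixes
of (number of openings minus number of closings). -/
def depthN (n : ℕ) (s : List (Fin n × Bool)) : ℕ :=
  (Finset.range (s.length + 1)).sup fun j =>
    (s.take j).countP (fun a => a.2) - (s.take j).countP (fun a => !a.2)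

/-- The maximum nesting depth of a word over `D₂`'s alphabet. -/
def depth2 (s : List Par) : ℕ :=
  (Finset.range (s.length + 1)).sup fun j =>
    (s.take j).countP (fun a => a = Par.lp ∨ a = Par.lb) -
      (s.take j).countP (fun a => a = Par.rp ∨ a = Par.rb)




namespace DepthAux

variable {α : Type*}

/-- Height of a word under weight `f`. -/
def hgt (f : α → ℤ) (s : List α) : ℤ := (s.map f).sum

lemma hgt_nil (f : α → ℤ) : hgt f ([] : List α) = 0 := rfl

lemma hgt_append (f : α → ℤ) (u v : List α) : hgt f (u ++ v) = hgt f u + hgt f v := by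
  simp [hgt]

lemma hgt_ones {f : α → ℤ} {t : List α} (h : ∀ a ∈ t, f a = 1) : hgt f t = t.length := by
  induction t with
  | nil => simp [hgt]
  | cons a t ih =>
    simp only [hgt, List.map_cons, List.sum_cons] at *
    rw [h a (by simp), ih (fun b hb => h b (by simp [hb]))]
    simp only [List.length_cons]
    push_cast; ring

lemma hgt_negones {f : α → ℤ} {t : List α} (h : ∀ a ∈ t, f a = -1) : hgt f t = -t.length := by
  induction t with
  | nil => simp [hgt]
  | cons a t ih =>
    simp only [hgt, List.map_cons, List.sum_cons] at *
    rw [h a (by simp), ih (fun b hb => h b (by simp [hb]))]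
    simp only [List.length_cons]
    push_cast; ring

/-- Max depth of a word under weight `f`. -/
def dep (f : α → ℤ) (s : List α) : ℕ :=
  (Finset.range (s.length + 1)).sup fun j => (hgt f (s.take j)).toNat

lemma prefix_append_cases {t u v : List α} (h : t <+: u ++ v) :
    t <+: u ∨ ∃ t', t = u ++ t' ∧ t' <+: v := by
  rcases le_or_gt t.length u.length with hl | hl
  · exact Or.inl (List.prefix_of_prefix_length_le h (u.prefix_append v) hl)
  · right
    have hu : u <+: t := List.prefix_of_prefix_length_le (u.prefix_append v) h hl.le
    obtain ⟨t', rfl⟩ := hu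
    obtain ⟨r, hr⟩ := h
    rw [List.append_assoc] at hr
    exact ⟨t', rfl, ⟨r, (List.append_cancel_left hr)⟩⟩

lemma le_dep {f : α → ℤ} {t s : List α} (h : t <+: s) : (hgt f t).toNat ≤ dep f s := by
  have h1 : t = s.take t.length := List.prefix_iff_eq_take.mp h
  have h2 : t.length ∈ Finset.range (s.length + 1) := by
    simp [Nat.lt_succ_iff, h.length_le]
  calc (hgt f t).toNat = (hgt f (s.take t.length)).toNat := by rw [← h1]
  _ ≤ _ := Finset.le_sup (f := fun j => (hgt f (s.take j)).toNat) h2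

lemma dep_le_iff {f : α → ℤ} {s : List α} {N : ℕ} :
    dep f s ≤ N ↔ ∀ t, t <+: s → (hgt f t).toNat ≤ N := by
  constructor
  · intro hN t ht
    exact le_trans (le_dep ht) hN
  · intro H
    apply Finset.sup_le
    intro j _
    exact H _ (List.take_prefix j s)

lemma exists_dep {f : α → ℤ} (s : List α) : ∃ t, t <+: s ∧ dep f s = (hgt f t).toNat := by
  obtain ⟨j, _, hj⟩ := Finset.exists_mem_eq_sup (Finset.range (s.length + 1))
    ⟨0, by simp⟩ (fun j => (hgt f (s.take j)).toNat)
  exact ⟨s.take j, List.take_prefix j s, hj⟩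

lemma dep_nil (f : α → ℤ) : dep f ([] : List α) = 0 := by
  simp [dep, hgt]

lemma dep_append {f : α → ℤ} {u v : List α} (hu : hgt f u = 0) :
    dep f (u ++ v) = max (dep f u) (dep f v) := by
  apply le_antisymm
  · rw [dep_le_iff]
    intro t ht
    rcases prefix_append_cases ht with h | ⟨t', rfl, ht'⟩
    · exact le_trans (le_dep h) (le_max_left _ _)
    · rw [hgt_append, hu, zero_add]
      exact le_trans (le_dep ht') (le_max_right _ _)
  · apply max_le
    · rw [dep_le_iff]
      intro t ht
      exact le_dep (ht.trans (u.prefix_append v))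
    · rw [dep_le_iff]
      intro t ht
      have : u ++ t <+: u ++ v := by
        obtain ⟨r, rfl⟩ := ht
        exact ⟨r, by simp⟩
      have := le_dep (f := f) this
      rwa [hgt_append, hu, zero_add] at this
  
lemma dep_wrap {f : α → ℤ} {x w y : List α}
    (hx : ∀ a ∈ x, f a = 1) (hy : ∀ a ∈ y, f a = -1)
    (hw : ∀ t, t <+: w → 0 ≤ hgt f t) :
    dep f (x ++ w ++ y) = x.length + dep f w := by
  apply le_antisymm
  · rw [dep_le_iff]
    intro t ht
    rw [List.append_assoc] at ht
    rcases prefix_append_cases ht with h | ⟨t', rfl, ht'⟩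
    · rw [hgt_ones (fun a ha => hx a (h.subset ha))]
      simpa using le_trans h.length_le (Nat.le_add_right _ _)
    · rcases prefix_append_cases ht' with h | ⟨t'', rfl, ht''⟩
      · rw [hgt_append, hgt_ones hx]
        rw [Int.toNat_le]
        push_cast
        have h1 : hgt f t' ≤ ((hgt f t').toNat : ℤ) := Int.self_le_toNat _
        have h2 : ((hgt f t').toNat : ℤ) ≤ (dep f w : ℤ) := by exact_mod_cast le_dep h
        omega
      · rw [hgt_append, hgt_append, hgt_ones hx, hgt_negones (fun a ha => hy a (ht''.subset ha))]
        rw [Int.toNat_le]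
        push_cast
        have h1 : hgt f w ≤ ((hgt f w).toNat : ℤ) := Int.self_le_toNat _
        have h2 : ((hgt f w).toNat : ℤ) ≤ (dep f w : ℤ) := by
          exact_mod_cast le_dep (List.prefix_refl w)
        have h3 : (0:ℤ) ≤ t''.length := by positivity
        omega
  · obtain ⟨t, ht, hdep⟩ := exists_dep (f := f) w
    have hpre : x ++ t <+: x ++ w ++ y := by
      obtain ⟨r, rfl⟩ := ht
      exact ⟨r ++ y, by simp⟩
    have := le_dep (f := f) hpre
    rw [hgt_append, hgt_ones hx] at this
    have h0 : 0 ≤ hgt f t := hw t ht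
    rw [hdep]
    omega

lemma nonneg_append {f : α → ℤ} {u v : List α} (hu0 : hgt f u = 0)
    (hu : ∀ t, t <+: u → 0 ≤ hgt f t) (hv : ∀ t, t <+: v → 0 ≤ hgt f t) :
    ∀ t, t <+: u ++ v → 0 ≤ hgt f t := by
  intro t ht
  rcases prefix_append_cases ht with h | ⟨t', rfl, ht'⟩
  · exact hu t h
  · rw [hgt_append, hu0, zero_add]; exact hv t' ht'

lemma nonneg_wrap {f : α → ℤ} {x w y : List α}
    (hx : ∀ a ∈ x, f a = 1) (hy : ∀ a ∈ y, f a = -1) (hlen : y.length ≤ x.length)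
    (hw0 : hgt f w = 0) (hw : ∀ t, t <+: w → 0 ≤ hgt f t) :
    ∀ t, t <+: x ++ w ++ y → 0 ≤ hgt f t := by
  intro t ht
  rw [List.append_assoc] at ht
  rcases prefix_append_cases ht with h | ⟨t', rfl, ht'⟩
  · rw [hgt_ones (fun a ha => hx a (h.subset ha))]; positivity
  · rcases prefix_append_cases ht' with h | ⟨t'', rfl, ht''⟩
    · rw [hgt_append, hgt_ones hx]
      have := hw _ h
      omega
    · rw [hgt_append, hgt_append, hgt_ones hx, hw0,
        hgt_negones (fun a ha => hy a (ht''.subset ha))]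
      have := ht''.length_le
      have hy' : t''.length ≤ x.length := le_trans this hlen
      omega

end DepthAux


open DepthAux

/-- weight on the `Dₙ` alphabet -/
def fN (n : ℕ) : Fin n × Bool → ℤ := fun a => if a.2 then 1 else -1

/-- weight on the `D₂` alphabet -/
def f2 : Par → ℤ
  | Par.lp => 1
  | Par.lb => 1
  | Par.rp => -1
  | Par.rb => -1

lemma cntN (n : ℕ) (t : List (Fin n × Bool)) :
    ((t.countP (fun a => a.2) : ℤ)) - t.countP (fun a => !a.2) = hgt (fN n) t := by
  induction t with
  | nil => simp [hgt]
  | cons a t ih =>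
    rcases a with ⟨i, b⟩
    cases b <;> simp [List.countP_cons, hgt, fN, List.map_cons] at * <;> omega

lemma cnt2 (t : List Par) :
    ((t.countP (fun a => a = Par.lp ∨ a = Par.lb) : ℤ)) -
      t.countP (fun a => a = Par.rp ∨ a = Par.rb) = hgt f2 t := by
  induction t with
  | nil => simp [hgt]
  | cons a t ih =>
    cases a <;> simp [List.countP_cons, hgt, f2, List.map_cons] at * <;> omega

lemma depthN_eq (n : ℕ) (s : List (Fin n × Bool)) : depthN n s = dep (fN n) s := by
  unfold depthN dep
  apply Finset.sup_congr rfl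
  intro j _
  rw [← cntN, Int.toNat_sub]

lemma depth2_eq (s : List Par) : depth2 s = dep f2 s := by
  unfold depth2 dep
  apply Finset.sup_congr rfl
  intro j _
  rw [← cnt2, Int.toNat_sub]

lemma encOpen_length (m i : ℕ) : (encOpen m i).length = m := by
  simp [encOpen, binDigits]

lemma encClose_length (m i : ℕ) : (encClose m i).length = m := by
  simp [encClose, binDigits]

lemma encOpen_ones (m i : ℕ) : ∀ a ∈ encOpen m i, f2 a = 1 := by
  intro a ha
  simp only [encOpen, List.mem_map] at ha
  obtain ⟨b, _, rfl⟩ := ha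
  cases b <;> rfl

lemma encClose_negones (m i : ℕ) : ∀ a ∈ encClose m i, f2 a = -1 := by
  intro a ha
  simp only [encClose, List.mem_map] at ha
  obtain ⟨b, _, rfl⟩ := ha
  cases b <;> rfl

lemma Γ_append (n m : ℕ) (u v : List (Fin n × Bool)) :
    Γ n m (u ++ v) = Γ n m u ++ Γ n m v := by
  simp [Γ]

lemma Γ_wrap (n m : ℕ) (i : Fin n) (u : List (Fin n × Bool)) :
    Γ n m ((i, true) :: u ++ [(i, false)]) =
      encOpen m i.val ++ Γ n m u ++ encClose m i.val := by
  simp [Γ]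

lemma xones (n : ℕ) (i : Fin n) : ∀ a ∈ [((i, true) : Fin n × Bool)], fN n a = 1 := by
  intro a ha; simp at ha; subst ha; rfl

lemma ynegones (n : ℕ) (i : Fin n) : ∀ a ∈ [((i, false) : Fin n × Bool)], fN n a = -1 := by
  intro a ha; simp at ha; subst ha; rfl

/-- Dyck invariants on both sides. -/
lemma dyck_inv (n m : ℕ) (s : List (Fin n × Bool)) (h : DyckN n s) :
    (hgt (fN n) s = 0 ∧ ∀ t, t <+: s → 0 ≤ hgt (fN n) t) ∧
    (hgt f2 (Γ n m s) = 0 ∧ ∀ t, t <+: Γ n m s → 0 ≤ hgt f2 t) := by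
  induction h with
  | nil =>
    refine ⟨⟨rfl, ?_⟩, ⟨rfl, ?_⟩⟩ <;>
      · intro t ht
        rw [List.prefix_nil.mp ht]
        exact le_refl 0
  | @wrap u i hu ih =>
    obtain ⟨⟨hN0, hNp⟩, ⟨h20, h2p⟩⟩ := ih
    constructor
    · have e : ((i, true) :: u ++ [(i, false)]) =
          [((i, true) : Fin n × Bool)] ++ u ++ [(i, false)] := by simp
      rw [e]
      constructor
      · rw [hgt_append, hgt_append, hN0, hgt_ones (xones n i), hgt_negones (ynegones n i)]
        simp
      · exact nonneg_wrap (xones n i) (ynegones n i) (by simp) hN0 hNp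
    · rw [Γ_wrap]
      constructor
      · rw [hgt_append, hgt_append, h20, hgt_ones (encOpen_ones m i.val),
          hgt_negones (encClose_negones m i.val), encOpen_length, encClose_length]
        ring
      · exact nonneg_wrap (encOpen_ones m i.val) (encClose_negones m i.val)
          (by rw [encOpen_length, encClose_length]) h20 h2p
  | @append u v hu hv ihu ihv =>
    obtain ⟨⟨hN0u, hNpu⟩, ⟨h20u, h2pu⟩⟩ := ihu
    obtain ⟨⟨hN0v, hNpv⟩, ⟨h20v, h2pv⟩⟩ := ihv
    refine ⟨⟨?_, nonneg_append hN0u hNpu hNpv⟩, ?_⟩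
    · rw [hgt_append, hN0u, hN0v]; ring
    · rw [Γ_append]
      exact ⟨by rw [hgt_append, h20u, h20v]; ring, nonneg_append h20u h2pu h2pv⟩

/-- If `s ∈ Dₙ` has maximum depth `k`, then `Γ(s)` has maximum depth `k · m`,
where `m = ⌈log₂ n⌉`. -/
theorem depth_encode (n : ℕ) (s : List (Fin n × Bool)) (h : DyckN n s) :
    depth2 (Γ n (Nat.clog 2 n) s) = depthN n s * Nat.clog 2 n := by
  set m := Nat.clog 2 n with hm
  rw [depth2_eq, depthN_eq]
  induction h with
  | nil => simp [Γ, dep_nil]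
  | @wrap u i hu ih =>
    obtain ⟨⟨_, hNp⟩, ⟨_, h2p⟩⟩ := dyck_inv n m u hu
    rw [Γ_wrap]
    rw [dep_wrap (encOpen_ones m i.val) (encClose_negones m i.val) h2p]
    have e : ((i, true) :: u ++ [(i, false)]) =
        [((i, true) : Fin n × Bool)] ++ u ++ [(i, false)] := by simp
    rw [e, dep_wrap (xones n i) (ynegones n i) hNp]
    rw [encOpen_length, ih]
    simp [add_mul]
  | @append u v hu hv ihu ihv =>
    obtain ⟨⟨hN0u, _⟩, ⟨h20u, _⟩⟩ := dyck_inv n m u hu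
    rw [Γ_append, dep_append h20u, dep_append hN0u, ihu, ihv]
    rcases le_total (dep (fN n) u) (dep (fN n) v) with hle | hle
    · rw [max_eq_right hle, max_eq_right (Nat.mul_le_mul_right m hle)]
    · rw [max_eq_left hle, max_eq_left (Nat.mul_le_mul_right m hle)]
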